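/- The multiplication ∗ on S = F ⊔ R is associative, so S is a semigroup, and S is completely regular: every element s ∈ S possesses an element s' ∈ S with s ∗ s' ∗ s = s, s' ∗ s ∗ s' = s' and s ∗ s' = s' ∗ s. -/
import Mathlib


/-- Multiplication `b ↦ b a` in the monoid `F¹ = Option F` (`none` is the
adjoined identity `1`), with the result regarded as an element of `F¹`. -/
def mulOne {F : Type*} [Semigroup F] : Option F → F → Option F
  | none, a => some a
  | some x, a => some (x * a)

/-- The multiplication `∗` on `S = F ⊔ R`, where `R = F¹` carries the right
zero multiplication: `a ∗ a'` is the product in `F`; `b ∗ b' = b'`;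
`a ∗ b = b`; and `b ∗ a = ba`, computed in `F¹`. -/
def smul {F : Type*} [Semigroup F] :
    F ⊕ Option F → F ⊕ Option F → F ⊕ Option F
  | Sum.inl a, Sum.inl a' => Sum.inl (a * a')
  | Sum.inl _, Sum.inr b => Sum.inr b
  | Sum.inr b, Sum.inl a => Sum.inr (mulOne b a)
  | Sum.inr _, Sum.inr b' => Sum.inr b'

/-- `S = F ⊔ R` is a semigroup and is completely regular. -/
theorem stmt12 {F : Type*} [Semigroup F] (inv : F → F)
    (hcr1 : ∀ a : F, a * inv a * a = a)
    (hcr2 : ∀ a : F, inv (inv a) = a)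
    (hcr3 : ∀ a : F, a * inv a = inv a * a) :
    (∀ a b c : F ⊕ Option F, smul (smul a b) c = smul a (smul b c)) ∧
    (∀ s : F ⊕ Option F, ∃ s' : F ⊕ Option F,
      smul (smul s s') s = s ∧ smul (smul s' s) s' = s' ∧
      smul s s' = smul s' s) := by
  constructor
  · rintro (a | b) (a' | b') (a'' | b'') <;>
      simp only [smul] <;>
      first
        | rfl
        | (rw [mul_assoc])
        | (cases b <;> simp [mulOne, mul_assoc])
  · rintro (a | b)
    · exact ⟨Sum.inl (inv a), by simp [smul, hcr1],
        by have := hcr1 (inv a); rw [hcr2] at this; simpa [smul] using this, by simp [smul, hcr3]⟩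
    · exact ⟨Sum.inr b, rfl, rfl, rfl⟩
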